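/- arXiv:2002.00283 — 5 statements merged into one kernel-verified Lean document; each statement's English description precedes it below -/
import Mathlib

section
/- Let Q ∈ ℝ^{N×N} satisfy Q·1 = 0, let κ > 0, and let (x, y) : [0, T] → ℝ^N × ℝ^N be a differentiable solution of the ODE x'(t) = Qᵀx(t) + κ(x(t)ᵀy(t))x(t) − κ·diag(y(t))·x(t), y'(t) = Qᵀy(t) + κ(x(t)ᵀy(t))y(t) − κ·diag(x(t))·y(t). If 1ᵀx(0) = 1ᵀy(0) = 1, then 1ᵀx(t) = 1ᵀy(t) = 1 for all t ∈ [0, T]; that is, the affine set S = {(x, y) : 1ᵀx = 1ᵀy = 1} is invariant under the flow. -/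
open Matrix Finset Set

/-- Auxiliary: a scalar function with `f' = a • f` on `[0,T]`, `f 0 = 0`, and `a` bounded,
vanishes on `[0,T]`. -/
theorem aux_gronwall_zero {T K : ℝ} {f a : ℝ → ℝ}
    (hf : ∀ t ∈ Set.Icc (0 : ℝ) T, HasDerivWithinAt f (a t * f t) (Set.Icc 0 T) t)
    (hK : ∀ t ∈ Set.Icc (0 : ℝ) T, ‖a t‖ ≤ K)
    (h0 : f 0 = 0) : ∀ t ∈ Set.Icc (0 : ℝ) T, f t = 0 := by
  have hcont : ContinuousOn f (Set.Icc 0 T) :=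
    fun t ht => (hf t ht).continuousWithinAt
  have hf' : ∀ t ∈ Set.Ico (0 : ℝ) T, HasDerivWithinAt f (a t * f t) (Set.Ici t) t := by
    intro t ht
    refine (hf t ⟨ht.1, le_of_lt ht.2⟩).mono_of_mem_nhdsWithin ?_
    have : Set.Ico t T ∈ nhdsWithin t (Set.Ici t) := by
      rw [← Set.Ici_inter_Iio]
      exact Filter.inter_mem self_mem_nhdsWithin
        (nhdsWithin_le_nhds (Iio_mem_nhds ht.2))
    exact Filter.mem_of_superset this (fun s hs => ⟨le_trans ht.1 hs.1, le_of_lt hs.2⟩)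
  have bound : ∀ t ∈ Set.Ico (0 : ℝ) T, ‖a t * f t‖ ≤ K * ‖f t‖ + 0 := by
    intro t ht
    rw [norm_mul, add_zero]
    exact mul_le_mul_of_nonneg_right (hK t ⟨ht.1, le_of_lt ht.2⟩) (norm_nonneg _)
  have := norm_le_gronwallBound_of_norm_deriv_right_le (δ := 0) hcont hf' (by simp [h0]) bound
  intro t ht
  have h := this t ht
  rw [gronwallBound_ε0_δ0] at h
  simpa using le_antisymm h (norm_nonneg _)

/-- the affine set `S = {(x,y) : 1ᵀx = 1ᵀy = 1}` is invariant under the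
interaction ODE when `Q` has zero row sums. -/
theorem sum_one_invariant (N : ℕ) (Q : Matrix (Fin N) (Fin N) ℝ)
    (hQ : Q.mulVec (fun _ => (1 : ℝ)) = 0) (κ : ℝ) (hκ : 0 < κ)
    (T : ℝ) (hT : 0 ≤ T) (x y : ℝ → (Fin N → ℝ))
    (hdx : ∀ t ∈ Set.Icc (0 : ℝ) T, HasDerivWithinAt x
      (Qᵀ.mulVec (x t) + (κ * (x t ⬝ᵥ y t)) • x t
        - κ • (Matrix.diagonal (y t)).mulVec (x t)) (Set.Icc 0 T) t)
    (hdy : ∀ t ∈ Set.Icc (0 : ℝ) T, HasDerivWithinAt y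
      (Qᵀ.mulVec (y t) + (κ * (x t ⬝ᵥ y t)) • y t
        - κ • (Matrix.diagonal (x t)).mulVec (y t)) (Set.Icc 0 T) t)
    (hx0 : ∑ i, x 0 i = 1) (hy0 : ∑ i, y 0 i = 1) :
    ∀ t ∈ Set.Icc (0 : ℝ) T, (∑ i, x t i = 1) ∧ (∑ i, y t i = 1) := by
  set a : ℝ → ℝ := fun t => κ * (x t ⬝ᵥ y t) with ha_def
  -- continuity and boundedness of `a` on `[0,T]`
  have hxc : ContinuousOn x (Set.Icc 0 T) := fun t ht => (hdx t ht).continuousWithinAt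
  have hyc : ContinuousOn y (Set.Icc 0 T) := fun t ht => (hdy t ht).continuousWithinAt
  have hacont : ContinuousOn a (Set.Icc 0 T) := by
    apply ContinuousOn.mul continuousOn_const
    simp only [dotProduct]
    exact continuousOn_finset_sum _ fun i _ =>
      ((continuous_apply i).comp_continuousOn hxc).mul
        ((continuous_apply i).comp_continuousOn hyc)
  obtain ⟨K, hK⟩ := isCompact_Icc.exists_bound_of_continuousOn hacont
  -- generic claim for one of the two equations
  have key : ∀ (z w : ℝ → Fin N → ℝ),
      (∀ t ∈ Set.Icc (0 : ℝ) T, HasDerivWithinAt z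
        (Qᵀ.mulVec (z t) + (κ * (x t ⬝ᵥ y t)) • z t
          - κ • (Matrix.diagonal (w t)).mulVec (z t)) (Set.Icc 0 T) t) →
      (∀ t, w t ⬝ᵥ z t = x t ⬝ᵥ y t) →
      (∑ i, z 0 i = 1) → ∀ t ∈ Set.Icc (0 : ℝ) T, ∑ i, z t i = 1 := by
    intro z w hz hwz hz0
    have hderiv : ∀ t ∈ Set.Icc (0 : ℝ) T,
        HasDerivWithinAt (fun t => (∑ i, z t i) - 1) (a t * ((∑ i, z t i) - 1))
          (Set.Icc 0 T) t := by
      intro t ht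
      have hcomp : ∀ i : Fin N, HasDerivWithinAt (fun t => z t i)
          ((Qᵀ.mulVec (z t) + (κ * (x t ⬝ᵥ y t)) • z t
            - κ • (Matrix.diagonal (w t)).mulVec (z t)) i) (Set.Icc 0 T) t := by
        intro i
        have := ((ContinuousLinearMap.proj (R := ℝ) (φ := fun _ : Fin N => ℝ)
          i).hasFDerivAt.comp_hasFDerivWithinAt t (hz t ht).hasFDerivWithinAt).hasDerivWithinAt
        simp at this; exact this
      have hsum := (HasDerivWithinAt.fun_sum (fun i (_ : i ∈ Finset.univ) => hcomp i)).sub_const 1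
      refine hsum.congr_deriv ?_
      have hQsum : ∀ j, ∑ i, Q j i = 0 := by
        intro j
        have := congrFun hQ j
        simpa [Matrix.mulVec, dotProduct] using this
      have h1 : ∑ i, Qᵀ.mulVec (z t) i = 0 := by
        simp only [Matrix.mulVec, dotProduct, Matrix.transpose_apply]
        rw [Finset.sum_comm]
        simp [← Finset.sum_mul, hQsum]
      have h2 : ∑ i, ((Matrix.diagonal (w t)).mulVec (z t)) i
          = x t ⬝ᵥ y t := by
        simp only [Matrix.mulVec_diagonal]
        rw [← hwz t]
        simp [dotProduct]
      simp only [Pi.sub_apply, Pi.add_apply, Finset.sum_sub_distrib, Finset.sum_add_distrib,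
        h1, Pi.smul_apply, smul_eq_mul, ← Finset.mul_sum]
      rw [h2]
      simp only [ha_def]
      ring
    have := aux_gronwall_zero hderiv hK (by simp [hz0])
    intro t ht
    have h := this t ht
    linarith [h]
  refine fun t ht => ⟨key x y hdx (fun t => dotProduct_comm _ _) hx0 t ht,
    key y x hdy (fun t => rfl) hy0 t ht⟩
end

section
/- Let G be a finite undirected connected simple graph on N ≥ 2 vertices with adjacency matrix A, degree matrix D = diag(A·1), combinatorial Laplacian L = D − A, and set Q = −L. Let κ > 0 and let (x*, y*) ∈ ℝ^N × ℝ^N have entrywise nonnegative entries with 1ᵀx* = 1ᵀy* = 1. If (x*, y*) is a fixed point of the interaction ODE, i.e. Qᵀx* + κ(x*ᵀy*)x* − κ·diag(y*)·x* = 0 and Qᵀy* + κ(x*ᵀy*)y* − κ·diag(x*)·y* = 0, then every entry of x* and every entry of y* is strictly positive. -/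
/-!
At a fixed point, `L x = diag(c) x` for the vector `c = κ (xᵀy) 1 - κ y`. Hence at a vertex `i`
with `x i = 0` we get `(L x) i = -∑_{j ~ i} x j = 0`, and nonnegativity forces `x` to vanish at
every neighbour of `i`. By connectedness a single zero of `x` would make `x = 0`, contradicting
`1ᵀx = 1`. The same argument applies to `y`.
-/

open Matrix Finset SimpleGraph

namespace SimpleGraph

variable {V : Type*} [Fintype V] [DecidableEq V] {G : SimpleGraph V} [DecidableRel G.Adj]

lemma eq_zero_of_adj_of_lapMatrix_mulVec_apply_eq_zero {v : V → ℝ} (hv : 0 ≤ v) {i j : V}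
    (hi : v i = 0) (hLi : (G.lapMatrix ℝ *ᵥ v) i = 0) (hij : G.Adj i j) : v j = 0 := by
  rw [lapMatrix_mulVec_apply, hi, mul_zero, zero_sub, neg_eq_zero,
    sum_eq_zero_iff_of_nonneg fun u _ => hv u] at hLi
  exact hLi j ((G.mem_neighborFinset i j).mpr hij)

lemma Connected.pos_of_lapMatrix_mulVec_eq_diagonal_mulVec (hG : G.Connected) {v c : V → ℝ}
    (hv : 0 ≤ v) (hv0 : v ≠ 0) (hc : G.lapMatrix ℝ *ᵥ v = diagonal c *ᵥ v) (i : V) :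
    0 < v i := by
  have hzero : ∀ {a b : V}, G.Walk a b → v a = 0 → v b = 0 := by
    intro a b p
    induction p with
    | nil => exact id
    | cons hab _ ih =>
      refine fun ha => ih (eq_zero_of_adj_of_lapMatrix_mulVec_apply_eq_zero hv ha ?_ hab)
      rw [hc, mulVec_diagonal, ha, mul_zero]
  exact (hv i).lt_of_ne' fun hi => hv0 (funext fun j => hzero (hG i j).some hi)

lemma lapMatrix_mulVec_eq_diagonal_mulVec_of_fixedPoint {κ : ℝ} {v w : V → ℝ}
    (hf : (-G.lapMatrix ℝ)ᵀ.mulVec v + (κ * (v ⬝ᵥ w)) • v - κ • (diagonal w).mulVec v = 0) :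
    G.lapMatrix ℝ *ᵥ v = diagonal (fun i => κ * (v ⬝ᵥ w) - κ * w i) *ᵥ v := by
  rw [transpose_neg, (isSymm_lapMatrix ℝ G).eq, neg_mulVec] at hf
  ext i
  have hi := congrFun hf i
  simp only [mulVec_diagonal, Pi.add_apply, Pi.sub_apply, Pi.neg_apply, Pi.smul_apply,
    smul_eq_mul, Pi.zero_apply] at hi ⊢
  linarith

end SimpleGraph

theorem fixed_point_positive_general (N : ℕ)
    (G : SimpleGraph (Fin N)) [DecidableRel G.Adj] (hconn : G.Connected)
    (L : Matrix (Fin N) (Fin N) ℝ)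
    (hL : L = Matrix.diagonal (fun i => (G.degree i : ℝ)) - G.adjMatrix ℝ)
    (κ : ℝ) (x y : Fin N → ℝ)
    (hx0 : ∀ i, 0 ≤ x i) (hy0 : ∀ i, 0 ≤ y i)
    (hx1 : ∑ i, x i = 1) (hy1 : ∑ i, y i = 1)
    (hfx : (-L)ᵀ.mulVec x + (κ * (x ⬝ᵥ y)) • x - κ • (Matrix.diagonal y).mulVec x = 0)
    (hfy : (-L)ᵀ.mulVec y + (κ * (x ⬝ᵥ y)) • y - κ • (Matrix.diagonal x).mulVec y = 0) :
    (∀ i, 0 < x i) ∧ (∀ i, 0 < y i) := by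
  have hLap : L = G.lapMatrix ℝ := hL
  subst hLap
  rw [dotProduct_comm] at hfy
  have hx : x ≠ 0 := fun h => by simp [h] at hx1
  have hy : y ≠ 0 := fun h => by simp [h] at hy1
  exact ⟨hconn.pos_of_lapMatrix_mulVec_eq_diagonal_mulVec hx0 hx
      (lapMatrix_mulVec_eq_diagonal_mulVec_of_fixedPoint hfx),
    hconn.pos_of_lapMatrix_mulVec_eq_diagonal_mulVec hy0 hy
      (lapMatrix_mulVec_eq_diagonal_mulVec_of_fixedPoint hfy)⟩

/-- every fixed point of the interaction ODE with nonnegative entries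
summing to one has all entries strictly positive (for a connected graph). -/
theorem fixed_point_positive (N : ℕ) (hN : 2 ≤ N)
    (G : SimpleGraph (Fin N)) [DecidableRel G.Adj] (hconn : G.Connected)
    (L : Matrix (Fin N) (Fin N) ℝ)
    (hL : L = Matrix.diagonal (fun i => (G.degree i : ℝ)) - G.adjMatrix ℝ)
    (κ : ℝ) (hκ : 0 < κ) (x y : Fin N → ℝ)
    (hx0 : ∀ i, 0 ≤ x i) (hy0 : ∀ i, 0 ≤ y i)
    (hx1 : ∑ i, x i = 1) (hy1 : ∑ i, y i = 1)
    (hfx : (-L)ᵀ.mulVec x + (κ * (x ⬝ᵥ y)) • x - κ • (Matrix.diagonal y).mulVec x = 0)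
    (hfy : (-L)ᵀ.mulVec y + (κ * (x ⬝ᵥ y)) • y - κ • (Matrix.diagonal x).mulVec y = 0) :
    (∀ i, 0 < x i) ∧ (∀ i, 0 < y i) :=
  fixed_point_positive_general N G hconn L hL κ x y hx0 hy0 hx1 hy1 hfx hfy
end

section
/- Let L ∈ ℝ^{N×N} be real symmetric, let Λ : [0, ∞) → ℝ be continuous, and let z : [0, ∞) → ℝ^N be differentiable with z(t) ≠ 0 for all t and z'(t) = −L z(t) + Λ(t) z(t). Define V(t) = (1/2)·z(t)ᵀL z(t) / (z(t)ᵀz(t)) (the Lyapunov function evaluated at the normalized trajectory z(t)/‖z(t)‖). Then V is differentiable with V'(t) = [ (z(t)ᵀL z(t))² − (z(t)ᵀz(t))·(z(t)ᵀL² z(t)) ] / (z(t)ᵀz(t))², so V'(t) ≤ 0 for all t, and V'(t) = 0 if and only if z(t) is an eigenvector of L. -/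
open Matrix Set

lemma dot_hasDeriv {N : ℕ} {f g : ℝ → Fin N → ℝ} {f' g' : Fin N → ℝ} {s : Set ℝ} {t : ℝ}
    (hf : HasDerivWithinAt f f' s t) (hg : HasDerivWithinAt g g' s t) :
    HasDerivWithinAt (fun u => f u ⬝ᵥ g u) (f' ⬝ᵥ g t + f t ⬝ᵥ g') s t := by
  simp only [dotProduct, Finset.sum_add_distrib.symm]
  exact HasDerivWithinAt.fun_sum fun i _ =>
    ((hasDerivWithinAt_pi.1 hf i).mul (hasDerivWithinAt_pi.1 hg i))

lemma mulVec_hasDeriv {N : ℕ} (L : Matrix (Fin N) (Fin N) ℝ) {f : ℝ → Fin N → ℝ}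
    {f' : Fin N → ℝ} {s : Set ℝ} {t : ℝ} (hf : HasDerivWithinAt f f' s t) :
    HasDerivWithinAt (fun u => L.mulVec (f u)) (L.mulVec f') s t := by
  rw [hasDerivWithinAt_pi]
  intro i
  simp only [Matrix.mulVec, dotProduct]
  exact HasDerivWithinAt.fun_sum fun j _ =>
    ((hasDerivWithinAt_pi.1 hf j).const_mul (L i j))

lemma dot_self_nonneg {N : ℕ} (v : Fin N → ℝ) : 0 ≤ v ⬝ᵥ v :=
  Finset.sum_nonneg fun i _ => mul_self_nonneg (v i)

/-- along a nonvanishing trajectory of `z' = -Lz + Λ(t)z`, the Rayleigh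
quotient Lyapunov function `V(t) = (1/2) z(t)ᵀLz(t)/(z(t)ᵀz(t))` is differentiable with
the stated derivative, which is nonpositive and vanishes exactly when `z(t)` is an
eigenvector of `L`. -/
theorem lyapunov_derivative_along_trajectory (N : ℕ)
    (L : Matrix (Fin N) (Fin N) ℝ) (hL : L.IsSymm)
    (Λ : ℝ → ℝ) (hΛ : ContinuousOn Λ (Set.Ici 0))
    (z : ℝ → (Fin N → ℝ))
    (hzne : ∀ t ∈ Set.Ici (0 : ℝ), z t ≠ 0)
    (hderiv : ∀ t ∈ Set.Ici (0 : ℝ),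
      HasDerivWithinAt z (-(L.mulVec (z t)) + Λ t • z t) (Set.Ici 0) t)
    (V : ℝ → ℝ)
    (hV : ∀ t, V t = (1 / 2) * (z t ⬝ᵥ L.mulVec (z t)) / (z t ⬝ᵥ z t)) :
    ∀ t ∈ Set.Ici (0 : ℝ),
      HasDerivWithinAt V
        (((z t ⬝ᵥ L.mulVec (z t)) ^ 2
            - (z t ⬝ᵥ z t) * (z t ⬝ᵥ (L * L).mulVec (z t))) / (z t ⬝ᵥ z t) ^ 2)
        (Set.Ici 0) t ∧
      ((z t ⬝ᵥ L.mulVec (z t)) ^ 2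
          - (z t ⬝ᵥ z t) * (z t ⬝ᵥ (L * L).mulVec (z t))) / (z t ⬝ᵥ z t) ^ 2 ≤ 0 ∧
      (((z t ⬝ᵥ L.mulVec (z t)) ^ 2
          - (z t ⬝ᵥ z t) * (z t ⬝ᵥ (L * L).mulVec (z t))) / (z t ⬝ᵥ z t) ^ 2 = 0 ↔
        ∃ lam : ℝ, L.mulVec (z t) = lam • z t) := by
  have hsym : ∀ v w : Fin N → ℝ, v ⬝ᵥ L.mulVec w = L.mulVec v ⬝ᵥ w := by
    intro v w
    rw [Matrix.dotProduct_mulVec, ← Matrix.mulVec_transpose, hL.eq]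
  intro t ht
  set a := z t ⬝ᵥ L.mulVec (z t) with ha
  set b := z t ⬝ᵥ z t with hb
  set c := z t ⬝ᵥ (L * L).mulVec (z t) with hc
  have hbpos : 0 < b := by
    rcases lt_or_eq_of_le (dot_self_nonneg (z t)) with h | h
    · exact h
    · exact absurd (dotProduct_self_eq_zero.1 h.symm) (hzne t ht)
  have hbne : b ≠ 0 := ne_of_gt hbpos
  have hc' : c = L.mulVec (z t) ⬝ᵥ L.mulVec (z t) := by
    rw [hc, ← Matrix.mulVec_mulVec, hsym]
  have hLa : L.mulVec (z t) ⬝ᵥ z t = a := (hsym (z t) (z t)).symm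
  -- derivative part
  have hw := hderiv t ht
  set w := -(L.mulVec (z t)) + Λ t • z t with hwdef
  have hA : HasDerivWithinAt (fun u => z u ⬝ᵥ L.mulVec (z u))
      (w ⬝ᵥ L.mulVec (z t) + z t ⬝ᵥ L.mulVec w) (Set.Ici 0) t :=
    dot_hasDeriv hw (mulVec_hasDeriv L hw)
  have hB : HasDerivWithinAt (fun u => z u ⬝ᵥ z u) (w ⬝ᵥ z t + z t ⬝ᵥ w) (Set.Ici 0) t :=
    dot_hasDeriv hw hw
  have hVfun : V = fun u => (1 / 2) * (z u ⬝ᵥ L.mulVec (z u)) / (z u ⬝ᵥ z u) :=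
    funext hV
  have hDV : HasDerivWithinAt V
      (((1 / 2) * (w ⬝ᵥ L.mulVec (z t) + z t ⬝ᵥ L.mulVec w) * b
        - (1 / 2) * a * (w ⬝ᵥ z t + z t ⬝ᵥ w)) / b ^ 2) (Set.Ici 0) t := by
    rw [hVfun]
    exact (hA.const_mul (1 / 2)).div hB hbne
  have h1 : z t ⬝ᵥ L.mulVec w = L.mulVec (z t) ⬝ᵥ w := hsym _ _
  have h2 : w ⬝ᵥ L.mulVec (z t) = L.mulVec (z t) ⬝ᵥ w :=
    dotProduct_comm _ _
  have h3 : L.mulVec (z t) ⬝ᵥ w = -c + Λ t * a := by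
    rw [hwdef, dotProduct_add, dotProduct_neg, dotProduct_smul,
      ← hc', smul_eq_mul, hLa]
  have h4 : z t ⬝ᵥ w = -a + Λ t * b := by
    rw [hwdef, dotProduct_add, dotProduct_neg, dotProduct_smul,
      smul_eq_mul, ← ha, ← hb]
  have h5 : w ⬝ᵥ z t = -a + Λ t * b := by rw [dotProduct_comm]; exact h4
  have hexp : ((1 / 2) * (w ⬝ᵥ L.mulVec (z t) + z t ⬝ᵥ L.mulVec w) * b
        - (1 / 2) * a * (w ⬝ᵥ z t + z t ⬝ᵥ w)) / b ^ 2 = (a ^ 2 - b * c) / b ^ 2 := by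
    rw [h1, h2, h3, h4, h5]
    field_simp
    ring
  rw [hexp] at hDV
  -- key identity with p = Lz - (a/b) • z
  set p := L.mulVec (z t) - (a / b) • z t with hp
  have key : a ^ 2 - b * c = -b * (p ⬝ᵥ p) := by
    rw [hp, sub_dotProduct, dotProduct_sub, dotProduct_sub,
      smul_dotProduct, smul_dotProduct, dotProduct_smul,
      dotProduct_smul, ← hc', smul_eq_mul, smul_eq_mul, smul_eq_mul, smul_eq_mul,
      hLa, ← ha, ← hb]
    field_simp
    ring
  have hpnn : 0 ≤ p ⬝ᵥ p := dot_self_nonneg p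
  refine ⟨hDV, ?_, ?_⟩
  · rw [key]
    apply div_nonpos_of_nonpos_of_nonneg
    · nlinarith
    · positivity
  · constructor
    · intro h
      have hnum : a ^ 2 - b * c = 0 := by
        rcases div_eq_zero_iff.1 h with h' | h'
        · exact h'
        · exact absurd h' (pow_ne_zero 2 hbne)
      have hpp : p ⬝ᵥ p = 0 := by
        rw [key] at hnum
        rcases mul_eq_zero.1 hnum with h' | h'
        · exact absurd h' (neg_ne_zero.2 hbne)
        · exact h'
      have hzero := dotProduct_self_eq_zero.1 hpp
      rw [hp, sub_eq_zero] at hzero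
      exact ⟨a / b, hzero⟩
    · rintro ⟨lam, hlam⟩
      have haa : a = lam * b := by
        rw [ha, hlam, dotProduct_smul, smul_eq_mul, ← hb]
      have hcc : c = lam ^ 2 * b := by
        rw [hc, ← Matrix.mulVec_mulVec, hlam, Matrix.mulVec_smul, hlam,
          dotProduct_smul, dotProduct_smul, smul_eq_mul, smul_eq_mul, ← hb]
        ring
      rw [haa, hcc]
      ring
end

section
/- Let G be a finite undirected connected simple graph on N ≥ 2 vertices with combinatorial Laplacian L = D − A, whose eigenvalues are 0 = λ₁ < λ₂ ≤ ⋯ ≤ λ_N. Let Λ : [0, ∞) → ℝ be continuous and let z : [0, ∞) → ℝ^N be differentiable with z'(t) = −L z(t) + Λ(t) z(t), z(0) ≠ 0, and 1ᵀz(0) = 0. Then z(t) ≠ 0 and 1ᵀz(t) = 0 for all t ≥ 0, and the normalized trajectory z(t)/‖z(t)‖ converges as t → ∞ to a limit w ∈ ℝ^N with ‖w‖ = 1 and Lw = μw for some eigenvalue μ ∈ {λ₂, …, λ_N}; i.e., every trajectory of the normalized system converges to a (normalized) eigenvector of L, a fixed point of the system. -/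
open Matrix Finset Set Filter SimpleGraph Topology

/-!
Expand `z t` in the orthonormal eigenbasis `v k` of the symmetric matrix `L`. Each coefficient
`v k ⬝ᵥ z t` solves the scalar equation `c' = (Λ t - λₖ) c`, hence equals
`(v k ⬝ᵥ z 0) * exp (F t - F 0 - λₖ t)` for an antiderivative `F` of `Λ`; the common factor
`exp (F t)` disappears under normalization. Since `L 1 = 0` and `λₖ > 0` for `k ≥ 1`, the vector
`1` spans the direction of `v 0`, so `1ᵀ z 0 = 0` kills the `v 0`-coefficient for all time.
If `μ` is the least `λₖ` with `v k ⬝ᵥ z 0 ≠ 0`, then `exp (μ t - F t) • z t` tends to the nonzero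
`μ`-eigenvector `∑_{λₖ = μ} (v k ⬝ᵥ z 0) • v k`, and the normalized trajectory to its normalization.
-/

theorem ContinuousOn.exists_hasDerivWithinAt_Ici {E : Type*} [NormedAddCommGroup E]
    [NormedSpace ℝ E] [CompleteSpace E] {f : ℝ → E} {a : ℝ} (hf : ContinuousOn f (Ici a)) :
    ∃ F : ℝ → E, ∀ t ∈ Ici a, HasDerivWithinAt F (f t) (Ici a) t := by
  have hcont : Continuous fun t => f (max a t) :=
    hf.comp_continuous (continuous_const.max continuous_id) fun t => le_max_left a t
  refine ⟨fun u => ∫ x in a..u, f (max a x), fun t ht => ?_⟩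
  simpa [max_eq_right (mem_Ici.1 ht)] using
    (hcont.integral_hasStrictDerivAt a t).hasDerivAt.hasDerivWithinAt

theorem eq_mul_exp_of_hasDerivWithinAt_Ici {a c F : ℝ → ℝ} {x₀ : ℝ}
    (hF : ∀ t ∈ Ici x₀, HasDerivWithinAt F (a t) (Ici x₀) t)
    (hc : ∀ t ∈ Ici x₀, HasDerivWithinAt c (a t * c t) (Ici x₀) t) :
    ∀ t ∈ Ici x₀, c t = c x₀ * Real.exp (F t - F x₀) := by
  have hg : ∀ t ∈ Ici x₀,
      HasDerivWithinAt (fun t => c t * Real.exp (-F t)) 0 (Ici x₀) t := fun t ht =>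
    ((hc t ht).mul (hF t ht).neg.exp).congr_deriv (by simp only [Pi.neg_apply]; ring)
  intro t ht
  have hconst := constant_of_has_deriv_right_zero
    (fun x hx => (hg x hx.1).continuousWithinAt.mono Icc_subset_Ici_self)
    (fun x hx => (hg x hx.1).mono (Ici_subset_Ici.2 hx.1)) t (right_mem_Icc.2 ht)
  rw [sub_eq_neg_add, Real.exp_add, ← mul_assoc, ← hconst, mul_assoc, ← Real.exp_add]
  simp

theorem HasDerivWithinAt.const_dotProduct {ι : Type*} [Fintype ι] {z : ℝ → ι → ℝ}
    {z' : ι → ℝ} {s : Set ℝ} {t : ℝ} (hz : HasDerivWithinAt z z' s t) (v : ι → ℝ) :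
    HasDerivWithinAt (fun t => v ⬝ᵥ z t) (v ⬝ᵥ z') s t :=
  HasDerivWithinAt.fun_sum fun i _ => (hasDerivWithinAt_pi.1 hz i).const_mul (v i)

theorem Matrix.IsSymm.dotProduct_mulVec_of_mulVec_eq_smul {ι R : Type*} [Fintype ι]
    [CommSemiring R] {L : Matrix ι ι R} (hL : L.IsSymm) {v : ι → R} {μ : R}
    (hv : L *ᵥ v = μ • v) (w : ι → R) : v ⬝ᵥ L *ᵥ w = μ * (v ⬝ᵥ w) := by
  rw [dotProduct_mulVec, ← mulVec_transpose, hL.eq, hv, smul_dotProduct, smul_eq_mul]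

theorem dotProduct_eq_mul_exp_of_hasDerivWithinAt {ι : Type*} [Fintype ι]
    {L : Matrix ι ι ℝ} (hL : L.IsSymm) {v : ι → ℝ} {μ : ℝ} (hv : L *ᵥ v = μ • v)
    {Λ F : ℝ → ℝ} {z : ℝ → ι → ℝ} (hF : ∀ t ∈ Ici (0 : ℝ), HasDerivWithinAt F (Λ t) (Ici 0) t)
    (hz : ∀ t ∈ Ici (0 : ℝ), HasDerivWithinAt z (-(L *ᵥ z t) + Λ t • z t) (Ici 0) t) :
    ∀ t ∈ Ici (0 : ℝ), v ⬝ᵥ z t = (v ⬝ᵥ z 0) * Real.exp (F t - F 0 - μ * t) := by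
  have hc : ∀ t ∈ Ici (0 : ℝ), HasDerivWithinAt (fun t => v ⬝ᵥ z t)
      ((Λ t - μ) * (v ⬝ᵥ z t)) (Ici 0) t := fun t ht => by
    convert (hz t ht).const_dotProduct v using 1
    rw [dotProduct_add, dotProduct_neg, hL.dotProduct_mulVec_of_mulVec_eq_smul hv,
      dotProduct_smul, smul_eq_mul]
    ring
  have hFμ : ∀ t ∈ Ici (0 : ℝ), HasDerivWithinAt (fun t => F t - μ * t) (Λ t - μ) (Ici 0) t :=
    fun t ht => (hF t ht).sub (by simpa using (hasDerivWithinAt_id t _).const_mul μ)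
  intro t ht
  rw [eq_mul_exp_of_hasDerivWithinAt_Ici hFμ hc t ht]
  congr 2
  ring

section Orthonormal

variable {ι R : Type*} [Fintype ι] [DecidableEq ι] [CommRing R] {v : ι → ι → R}

theorem sum_dotProduct_smul_eq_self (horth : ∀ j k, v j ⬝ᵥ v k = if j = k then 1 else 0)
    (w : ι → R) : ∑ k, (v k ⬝ᵥ w) • v k = w := by
  have hright : Matrix.of v * (Matrix.of v)ᵀ = 1 := by
    ext j k
    simpa [Matrix.mul_apply, Matrix.one_apply, dotProduct] using horth j k
  calc ∑ k, (v k ⬝ᵥ w) • v k = (Matrix.of v)ᵀ *ᵥ (Matrix.of v *ᵥ w) := by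
        rw [mulVec_transpose, vecMul_eq_sum]
        rfl
    _ = w := by rw [mulVec_mulVec, mul_eq_one_comm.1 hright, one_mulVec]

theorem dotProduct_sum_smul (horth : ∀ j k, v j ⬝ᵥ v k = if j = k then 1 else 0)
    (a : ι → R) (j : ι) : v j ⬝ᵥ ∑ k, a k • v k = a j := by
  simp only [dotProduct_sum, dotProduct_smul, horth, smul_eq_mul, mul_ite, mul_one, mul_zero,
    sum_ite_eq, Finset.mem_univ, if_true]

theorem exists_dotProduct_ne_zero (horth : ∀ j k, v j ⬝ᵥ v k = if j = k then 1 else 0)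
    {w : ι → R} (hw : w ≠ 0) : ∃ k, v k ⬝ᵥ w ≠ 0 := by
  by_contra! h
  exact hw (by rw [← sum_dotProduct_smul_eq_self horth w]; simp [h])

theorem dotProduct_eq_sum_mul (horth : ∀ j k, v j ⬝ᵥ v k = if j = k then 1 else 0)
    (x y : ι → R) : x ⬝ᵥ y = ∑ k, (v k ⬝ᵥ x) * (v k ⬝ᵥ y) := by
  conv_lhs => rw [← sum_dotProduct_smul_eq_self horth x]
  simp [sum_dotProduct, smul_dotProduct]

theorem dotProduct_eq_mul_of_mulVec_eq_zero [NoZeroDivisors R] {L : Matrix ι ι R}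
    (hL : L.IsSymm) (horth : ∀ j k, v j ⬝ᵥ v k = if j = k then 1 else 0) {lam : ι → R}
    (heig : ∀ k, L *ᵥ v k = lam k • v k) {x : ι → R} (hx : L *ᵥ x = 0) {k₀ : ι}
    (hlam : ∀ k ≠ k₀, lam k ≠ 0) (y : ι → R) : x ⬝ᵥ y = (v k₀ ⬝ᵥ x) * (v k₀ ⬝ᵥ y) := by
  rw [dotProduct_eq_sum_mul horth, Fintype.sum_eq_single k₀]
  intro k hk
  have hkx : lam k * (v k ⬝ᵥ x) = 0 := by
    rw [← hL.dotProduct_mulVec_of_mulVec_eq_smul (heig k), hx, dotProduct_zero]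
  rw [(mul_eq_zero.1 hkx).resolve_left (hlam k hk), zero_mul]

end Orthonormal

theorem mulVec_sum_ite_smul {κ ι R : Type*} [Fintype κ] [Fintype ι] [CommSemiring R]
    [DecidableEq R] {L : Matrix ι ι R} {v : κ → ι → R} {lam : κ → R}
    (heig : ∀ k, L *ᵥ v k = lam k • v k) (c : κ → R) (μ : R) :
    L *ᵥ ∑ k, (if lam k = μ then c k else 0) • v k
      = μ • ∑ k, (if lam k = μ then c k else 0) • v k := by
  rw [mulVec_sum, smul_sum]
  refine sum_congr rfl fun k _ => ?_
  rw [mulVec_smul, heig]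
  split_ifs with h
  · rw [h, smul_comm]
  · simp

theorem sum_eq_zero_iff_dotProduct_eq_zero {ι : Type*} [Fintype ι] [DecidableEq ι]
    [Nonempty ι] {L : Matrix ι ι ℝ} (hL : L.IsSymm) {v : ι → ι → ℝ}
    (horth : ∀ j k, v j ⬝ᵥ v k = if j = k then 1 else 0) {lam : ι → ℝ}
    (heig : ∀ k, L *ᵥ v k = lam k • v k) (h1 : L *ᵥ 1 = 0) {k₀ : ι}
    (hlam : ∀ k ≠ k₀, lam k ≠ 0) (y : ι → ℝ) : ∑ i, y i = 0 ↔ v k₀ ⬝ᵥ y = 0 := by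
  have key := dotProduct_eq_mul_of_mulVec_eq_zero hL horth heig h1 hlam
  have hv : v k₀ ⬝ᵥ 1 ≠ 0 := fun h => by
    simpa [one_dotProduct_one, h] using key 1
  rw [← one_dotProduct, key, mul_eq_zero, or_iff_right hv]

section DotNormalize

variable {ι : Type*} [Fintype ι]

-- `x / ‖x‖` for the Euclidean norm: the norm instance on `ι → ℝ` is the sup norm.
noncomputable def dotNormalize (x : ι → ℝ) : ι → ℝ := (√(x ⬝ᵥ x))⁻¹ • x

theorem dotProduct_self_pos {x : ι → ℝ} (hx : x ≠ 0) : 0 < x ⬝ᵥ x :=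
  (sum_nonneg fun i _ => mul_self_nonneg (x i)).lt_of_ne' (dotProduct_self_eq_zero.not.2 hx)

theorem dotNormalize_smul {s : ℝ} (hs : 0 < s) (x : ι → ℝ) :
    dotNormalize (s • x) = dotNormalize x := by
  rw [dotNormalize, dotNormalize, smul_dotProduct, dotProduct_smul, smul_eq_mul, smul_eq_mul,
    ← mul_assoc, Real.sqrt_mul (mul_self_nonneg s), Real.sqrt_mul_self hs.le, smul_smul,
    mul_inv, mul_right_comm, inv_mul_cancel₀ hs.ne', one_mul]

theorem dotNormalize_dotProduct_self {x : ι → ℝ} (hx : x ≠ 0) :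
    dotNormalize x ⬝ᵥ dotNormalize x = 1 := by
  have hpos := dotProduct_self_pos hx
  rw [dotNormalize, smul_dotProduct, dotProduct_smul, smul_eq_mul, smul_eq_mul, ← mul_assoc,
    ← mul_inv, Real.mul_self_sqrt hpos.le, inv_mul_cancel₀ hpos.ne']

theorem continuousAt_dotNormalize {x : ι → ℝ} (hx : x ≠ 0) : ContinuousAt dotNormalize x :=
  ((continuous_id.dotProduct continuous_id).sqrt.continuousAt.inv₀
    (Real.sqrt_ne_zero'.2 (dotProduct_self_pos hx))).smul continuousAt_id

end DotNormalize

theorem tendsto_sum_mul_exp_smul {κ E : Type*} [Fintype κ] [TopologicalSpace E]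
    [AddCommMonoid E] [ContinuousAdd E] [Module ℝ E] [ContinuousSMul ℝ E] (v : κ → E)
    {c lam : κ → ℝ} {μ : ℝ} (hμ : ∀ k, c k ≠ 0 → μ ≤ lam k) :
    Tendsto (fun t => ∑ k, (c k * Real.exp (-((lam k - μ) * t))) • v k) atTop
      (𝓝 (∑ k, (if lam k = μ then c k else 0) • v k)) := by
  refine tendsto_finsetSum _ fun k _ => Tendsto.smul_const ?_ (v k)
  rcases eq_or_ne (c k) 0 with hc | hc
  · simp [hc]
  rcases (hμ k hc).eq_or_lt with h | h
  · simp [← h]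
  · simpa [h.ne'] using tendsto_const_nhds.mul
      (Real.tendsto_exp_neg_atTop_nhds_zero.comp (tendsto_id.const_mul_atTop (sub_pos.2 h)))

theorem tendsto_dotNormalize_of_eq_sum_mul_exp {κ ι : Type*} [Fintype κ] [Fintype ι]
    {v : κ → ι → ℝ} {c lam : κ → ℝ} {μ : ℝ} (hμ : ∀ k, c k ≠ 0 → μ ≤ lam k)
    (hu : ∑ k, (if lam k = μ then c k else 0) • v k ≠ 0) {g : ℝ → ℝ} {z : ℝ → ι → ℝ}
    (hz : ∀ᶠ t in atTop, z t = ∑ k, (c k * Real.exp (g t - lam k * t)) • v k) :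
    Tendsto (fun t => dotNormalize (z t)) atTop
      (𝓝 (dotNormalize (∑ k, (if lam k = μ then c k else 0) • v k))) := by
  refine ((continuousAt_dotNormalize hu).tendsto.comp (tendsto_sum_mul_exp_smul v hμ)).congr' ?_
  filter_upwards [hz] with t ht
  rw [ht, Function.comp_apply, ← dotNormalize_smul (Real.exp_pos (g t - μ * t)), smul_sum]
  refine congrArg dotNormalize (sum_congr rfl fun k _ => ?_)
  rw [smul_smul, mul_left_comm, ← Real.exp_add]
  congr 3
  ring

/-- every trajectory of `z' = -Lz + Λ(t)z` starting with `z(0) ≠ 0` and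
`1ᵀz(0) = 0` stays nonzero and orthogonal to `1`, and its normalization converges to a
normalized eigenvector of `L` for one of the eigenvalues `λ₂, …, λ_N`. -/
theorem normalized_trajectory_converges_to_eigenvector (N : ℕ) (hN : 2 ≤ N)
    (G : SimpleGraph (Fin N)) [DecidableRel G.Adj]
    (L : Matrix (Fin N) (Fin N) ℝ)
    (hL : L = Matrix.diagonal (fun i => (G.degree i : ℝ)) - G.adjMatrix ℝ)
    (lam : Fin N → ℝ) (v : Fin N → (Fin N → ℝ))
    (hmono : Monotone lam)
    (horth : ∀ j k, v j ⬝ᵥ v k = if j = k then 1 else 0)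
    (heig : ∀ k, L.mulVec (v k) = lam k • v k)
    (hlam0 : lam ⟨0, by omega⟩ = 0)
    (hgap : lam ⟨0, by omega⟩ < lam ⟨1, by omega⟩)
    (Λ : ℝ → ℝ) (hΛ : ContinuousOn Λ (Set.Ici 0))
    (z : ℝ → (Fin N → ℝ))
    (hderiv : ∀ t ∈ Set.Ici (0 : ℝ),
      HasDerivWithinAt z (-(L.mulVec (z t)) + Λ t • z t) (Set.Ici 0) t)
    (hz0 : z 0 ≠ 0) (hsum0 : ∑ i, z 0 i = 0) :
    (∀ t ∈ Set.Ici (0 : ℝ), z t ≠ 0 ∧ ∑ i, z t i = 0) ∧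
    ∃ w : Fin N → ℝ, w ⬝ᵥ w = 1 ∧
      (∃ k : Fin N, 1 ≤ (k : ℕ) ∧ L.mulVec w = lam k • w) ∧
      Filter.Tendsto (fun t => (Real.sqrt (z t ⬝ᵥ z t))⁻¹ • z t)
        Filter.atTop (nhds w) := by
  obtain rfl : L = G.lapMatrix ℝ := hL
  set e₀ : Fin N := ⟨0, by omega⟩
  have hpos : ∀ k ≠ e₀, 0 < lam k := fun k hk => hlam0 ▸ hgap.trans_le
    (hmono (Fin.mk_le_of_le_val (Nat.one_le_iff_ne_zero.2 fun h => hk (Fin.ext h))))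
  have : Nonempty (Fin N) := ⟨e₀⟩
  have hsum : ∀ y : Fin N → ℝ, ∑ i, y i = 0 ↔ v e₀ ⬝ᵥ y = 0 :=
    sum_eq_zero_iff_dotProduct_eq_zero (G.isSymm_lapMatrix ℝ) horth heig
      G.lapMatrix_mulVec_const_eq_zero fun k hk => (hpos k hk).ne'
  obtain ⟨F, hF⟩ := hΛ.exists_hasDerivWithinAt_Ici
  set c : Fin N → ℝ := fun k => v k ⬝ᵥ z 0
  have hcoef : ∀ k, ∀ t ∈ Ici (0 : ℝ), v k ⬝ᵥ z t = c k * Real.exp (F t - F 0 - lam k * t) :=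
    fun k => dotProduct_eq_mul_exp_of_hasDerivWithinAt (G.isSymm_lapMatrix ℝ) (heig k) hF hderiv
  have hc₀ : c e₀ = 0 := (hsum _).1 hsum0
  obtain ⟨m, hm : c m ≠ 0, hmin⟩ := Set.exists_min_image {k | c k ≠ 0} lam (Set.toFinite _)
    (exists_dotProduct_ne_zero horth hz0)
  set u := ∑ k, (if lam k = lam m then c k else 0) • v k
  have hum : v m ⬝ᵥ u = c m :=
    (dotProduct_sum_smul horth (fun k => if lam k = lam m then c k else 0) m).trans (if_pos rfl)
  have hu : u ≠ 0 := fun h => hm (by rw [← hum, h, dotProduct_zero])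
  refine ⟨fun t ht => ⟨fun h => ?_, ?_⟩, dotNormalize u, dotNormalize_dotProduct_self hu,
    ⟨m, Nat.one_le_iff_ne_zero.2 fun h => hm (by rwa [show m = e₀ from Fin.ext h]), ?_⟩,
    tendsto_dotNormalize_of_eq_sum_mul_exp hmin hu
      (g := fun t => F t - F 0) ?_⟩
  · simpa [h, hm, Real.exp_ne_zero] using hcoef m t ht
  · rw [hsum, hcoef e₀ t ht, hc₀, zero_mul]
  · rw [dotNormalize, mulVec_smul, mulVec_sum_ite_smul heig, smul_comm]
  · filter_upwards [eventually_ge_atTop 0] with t ht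
    rw [← sum_dotProduct_smul_eq_self horth (z t)]
    exact sum_congr rfl fun k _ => by rw [hcoef k t ht]
end

section
/- Let Q ∈ ℝ^{N×N}, κ > 0, and suppose (x*, y*) ∈ ℝ^N × ℝ^N satisfies the fixed-point equations Qᵀx* + κ(x*ᵀy*)x* − κ·diag(y*)·x* = 0 and Qᵀy* + κ(x*ᵀy*)y* − κ·diag(x*)·y* = 0. Then, setting z* = x* − y* and Λ* = κ·x*ᵀy*, one has Qᵀz* + Λ*z* = 0; in particular, when Q = −L for a graph Laplacian L, either z* = 0 or z* is an eigenvector of Lᵀ with eigenvalue Λ*. -/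
open Matrix

/-! The two fixed-point equations differ only in their linear parts: the cubic interaction terms
`diag(y)·x` and `diag(x)·y` coincide (both have entries `xᵢ yᵢ`), so subtracting the equations
leaves a linear equation for `x - y`. -/

variable {n R : Type*} [Fintype n]

theorem diagonal_mulVec_comm [DecidableEq n] [CommSemiring R] (x y : n → R) :
    diagonal y *ᵥ x = diagonal x *ᵥ y := by
  ext i
  simp only [mulVec_diagonal, mul_comm]

theorem mulVec_sub_add_smul_eq_zero_of_fixed_point [DecidableEq n] [CommRing R] (A : Matrix n n R) (c k : R)
    {x y : n → R}
    (hx : A *ᵥ x + c • x - k • diagonal y *ᵥ x = 0)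
    (hy : A *ᵥ y + c • y - k • diagonal x *ᵥ y = 0) :
    A *ᵥ (x - y) + c • (x - y) = 0 := by
  rw [diagonal_mulVec_comm] at hx
  rw [mulVec_sub]
  linear_combination (norm := module) hx - hy

theorem transpose_mulVec_eq_smul_of_neg [CommRing R] {L : Matrix n n R} {c : R} {z : n → R}
    (h : (-L)ᵀ *ᵥ z + c • z = 0) : Lᵀ *ᵥ z = c • z := by
  rw [transpose_neg, neg_mulVec] at h
  linear_combination (norm := module) -h

theorem fixed_point_difference_eigenvector_general (N : ℕ)
    (Q : Matrix (Fin N) (Fin N) ℝ) (κ : ℝ) (x y : Fin N → ℝ)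
    (hfx : Qᵀ.mulVec x + (κ * (x ⬝ᵥ y)) • x - κ • (Matrix.diagonal y).mulVec x = 0)
    (hfy : Qᵀ.mulVec y + (κ * (x ⬝ᵥ y)) • y - κ • (Matrix.diagonal x).mulVec y = 0) :
    Qᵀ.mulVec (x - y) + (κ * (x ⬝ᵥ y)) • (x - y) = 0 ∧
    (∀ L : Matrix (Fin N) (Fin N) ℝ, Q = -L →
      (x - y = 0 ∨ (x - y ≠ 0 ∧ Lᵀ.mulVec (x - y) = (κ * (x ⬝ᵥ y)) • (x - y)))) := by
  have hz := mulVec_sub_add_smul_eq_zero_of_fixed_point Qᵀ _ κ hfx hfy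
  refine ⟨hz, fun L hQ => ?_⟩
  subst hQ
  exact (em (x - y = 0)).imp_right fun hne => ⟨hne, transpose_mulVec_eq_smul_of_neg hz⟩

/-- at a fixed point of the interaction ODE, the difference
`z* = x* − y*` satisfies `Qᵀz* + Λ*z* = 0` with `Λ* = κ x*ᵀy*`; in particular, when
`Q = -L`, either `z* = 0` or `z*` is an eigenvector of `Lᵀ` with eigenvalue `Λ*`. -/
theorem fixed_point_difference_eigenvector (N : ℕ)
    (Q : Matrix (Fin N) (Fin N) ℝ) (κ : ℝ) (hκ : 0 < κ) (x y : Fin N → ℝ)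
    (hfx : Qᵀ.mulVec x + (κ * (x ⬝ᵥ y)) • x - κ • (Matrix.diagonal y).mulVec x = 0)
    (hfy : Qᵀ.mulVec y + (κ * (x ⬝ᵥ y)) • y - κ • (Matrix.diagonal x).mulVec y = 0) :
    Qᵀ.mulVec (x - y) + (κ * (x ⬝ᵥ y)) • (x - y) = 0 ∧
    (∀ L : Matrix (Fin N) (Fin N) ℝ, Q = -L →
      (x - y = 0 ∨ (x - y ≠ 0 ∧ Lᵀ.mulVec (x - y) = (κ * (x ⬝ᵥ y)) • (x - y)))) :=
  fixed_point_difference_eigenvector_general N Q κ x y hfx hfy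
end
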